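/- arXiv:1908.04398 — 6 statements merged into one kernel-verified Lean document; each statement's English description precedes it below -/
import Mathlib

section
/- Let r : U → U be a smooth retraction with r(0)=0 on an open subset U of a Banach space E, R := dr(0), β := (1−R)∘(1−r), and α := β + R∘r. Then α ∘ r = R ∘ α on U, α(0) = 0, and dα(0) = id. -/
theorem stmt_3 {E : Type*} [NormedAddCommGroup E] [NormedSpace ℝ E] [CompleteSpace E]
    (U : Set E) (hU : IsOpen U) (h0 : (0 : E) ∈ U)
    (r : E → E) (hmaps : Set.MapsTo r U U)
    (hC1 : ContDiffOn ℝ 1 r U)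
    (hidem : ∀ x ∈ U, r (r x) = r x) (hr0 : r 0 = 0)
    (R : E →L[ℝ] E) (hR : R = fderiv ℝ r 0)
    (β α : E → E)
    (hβ : ∀ x, β x = (x - r x) - R (x - r x))
    (hα : ∀ x, α x = β x + R (r x)) :
    (∀ x ∈ U, α (r x) = R (α x)) ∧ α 0 = 0 ∧
      fderiv ℝ α 0 = ContinuousLinearMap.id ℝ E := by
  have hd : DifferentiableAt ℝ r 0 :=
    (hC1.differentiableOn one_ne_zero).differentiableAt (hU.mem_nhds h0)
  have hfd : HasFDerivAt r R 0 := by rw [hR]; exact hd.hasFDerivAt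
  have hfd0 : HasFDerivAt r R (r 0) := by rwa [hr0]
  have hcomp : HasFDerivAt (r ∘ r) (R.comp R) 0 := hfd0.comp 0 hfd
  have heq : r ∘ r =ᶠ[nhds (0 : E)] r := by
    filter_upwards [hU.mem_nhds h0] with x hx
    exact hidem x hx
  have hRR : R.comp R = R := by
    rw [← hcomp.fderiv, heq.fderiv_eq, ← hR]
  have hRRx : ∀ y, R (R y) = R y := fun y => DFunLike.congr_fun hRR y
  refine ⟨?_, ?_, ?_⟩
  · intro x hx
    simp only [hα, hβ, hidem x hx, map_sub, map_add, hRRx, sub_self, zero_sub,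
      neg_zero, zero_add, map_zero, sub_zero]
  · simp [hα, hβ, hr0]
  · have h1 : HasFDerivAt (fun x => x - r x) (ContinuousLinearMap.id ℝ E - R) 0 :=
      (hasFDerivAt_id 0).sub hfd
    have h2 : HasFDerivAt (fun x => R (x - r x))
        (R.comp (ContinuousLinearMap.id ℝ E - R)) 0 :=
      (R.hasFDerivAt).comp 0 h1
    have h3 : HasFDerivAt (fun x => R (r x)) (R.comp R) 0 :=
      (R.hasFDerivAt).comp 0 hfd
    have hαd : HasFDerivAt α
        (((ContinuousLinearMap.id ℝ E - R) - R.comp (ContinuousLinearMap.id ℝ E - R))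
          + R.comp R) 0 := by
      have : α = fun x => ((x - r x) - R (x - r x)) + R (r x) := by
        funext x; rw [hα, hβ]
      rw [this]
      exact (h1.sub h2).add h3
    rw [hαd.fderiv]
    ext x
    simp [hRRx]
end

section
/- In the Hilbert space ℓ² of square-summable real sequences, let A := {a ∈ ℓ² : a(2n) = 0 for all n ≥ 1} and B := {b ∈ ℓ² : b(2n) = b(2n−1)/(2n) for all n ≥ 1}. Then A and B are closed subspaces but A + B is not closed in ℓ². -/
open scoped ENNReal
open Filter

noncomputable section StmtAux

local notation "H" => lp (fun _ : ℕ => ℝ) 2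

lemma stmt5_toReal : (2 : ℝ≥0∞).toReal = 2 := by simp

lemma stmt5_eval_cont (k : ℕ) : Continuous fun x : H => (x : ℕ → ℝ) k := by
  refine (LipschitzWith.of_dist_le_mul (K := 1) fun x y => ?_).continuous
  rw [NNReal.coe_one, one_mul, dist_eq_norm, dist_eq_norm]
  have : x k - y k = (x - y : H) k := by simp [lp.coeFn_sub]
  rw [show ‖(x:ℕ→ℝ) k - (y:ℕ→ℝ) k‖ = ‖(x - y : H) k‖ by rw [this]]
  exact lp.norm_apply_le_norm two_ne_zero _ _

lemma stmt5_memℓp_of_finite {f : ℕ → ℝ} (hf : (Function.support f).Finite) :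
    Memℓp f 2 := by
  apply memℓp_gen
  apply summable_of_ne_finset_zero (s := hf.toFinset)
  intro i hi
  have : f i = 0 := by
    by_contra h
    exact hi (hf.mem_toFinset.2 h)
  simp [this, Real.zero_rpow, stmt5_toReal]

/-- The companion sequence in B for a given coordinate function. -/
def stmt5_bfun (f : ℕ → ℝ) (k : ℕ) : ℝ :=
  if Even k ∧ k ≠ 0 then f k else if Odd k then (k + 1 : ℝ) * f (k + 1) else 0

lemma stmt5_bfun_support {f : ℕ → ℝ} (hf : (Function.support f).Finite) :
    (Function.support (stmt5_bfun f)).Finite := by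
  apply (hf.union (hf.preimage (Set.injOn_of_injective Nat.succ_injective))).subset
  intro k hk
  simp only [Function.mem_support, stmt5_bfun] at hk
  by_cases h1 : Even k ∧ k ≠ 0
  · rw [if_pos h1] at hk; exact Or.inl hk
  · rw [if_neg h1] at hk
    by_cases h2 : Odd k
    · rw [if_pos h2] at hk
      right
      simp only [Set.mem_preimage, Function.mem_support]
      intro h
      apply hk
      rw [show k + 1 = Nat.succ k from rfl, h]; ring
    · rw [if_neg h2] at hk; exact absurd rfl hk

lemma stmt5_bfun_even {f : ℕ → ℝ} {n : ℕ} (hn : 1 ≤ n) :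
    stmt5_bfun f (2 * n) = f (2 * n) := by
  rw [stmt5_bfun, if_pos ⟨even_two_mul n, by omega⟩]

lemma stmt5_bfun_odd {f : ℕ → ℝ} {n : ℕ} (hn : 1 ≤ n) :
    stmt5_bfun f (2 * n - 1) = (2 * n : ℝ) * f (2 * n) := by
  have hodd : Odd (2 * n - 1) := by rw [Nat.odd_iff]; omega
  have hne : ¬(Even (2 * n - 1) ∧ 2 * n - 1 ≠ 0) := by
    rintro ⟨he, -⟩; rw [Nat.even_iff] at he; omega
  rw [stmt5_bfun, if_neg hne, if_pos hodd]
  have h1 : 2 * n - 1 + 1 = 2 * n := by omega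
  rw [h1]
  push_cast [h1]
  ring_nf
  rw [Nat.cast_sub (by omega)]
  push_cast
  ring

end StmtAux

theorem stmt_5 (A B : Submodule ℝ (lp (fun _ : ℕ => ℝ) 2))
    (hA : (A : Set (lp (fun _ : ℕ => ℝ) 2)) =
      {a : lp (fun _ : ℕ => ℝ) 2 | ∀ n : ℕ, 1 ≤ n → (a : ∀ _ : ℕ, ℝ) (2 * n) = 0})
    (hB : (B : Set (lp (fun _ : ℕ => ℝ) 2)) =
      {b : lp (fun _ : ℕ => ℝ) 2 | ∀ n : ℕ, 1 ≤ n →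
        (b : ∀ _ : ℕ, ℝ) (2 * n) = (b : ∀ _ : ℕ, ℝ) (2 * n - 1) / (2 * n : ℝ)}) :
    IsClosed (A : Set (lp (fun _ : ℕ => ℝ) 2)) ∧
    IsClosed (B : Set (lp (fun _ : ℕ => ℝ) 2)) ∧
    ¬ IsClosed {x : lp (fun _ : ℕ => ℝ) 2 | ∃ a ∈ A, ∃ b ∈ B, x = a + b} := by
  have memA : ∀ a : lp (fun _ : ℕ => ℝ) 2, a ∈ A ↔
      ∀ n : ℕ, 1 ≤ n → (a : ℕ → ℝ) (2 * n) = 0 := by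
    intro a
    rw [← SetLike.mem_coe, hA]; rfl
  have memB : ∀ b : lp (fun _ : ℕ => ℝ) 2, b ∈ B ↔
      ∀ n : ℕ, 1 ≤ n → (b : ℕ → ℝ) (2 * n) = (b : ℕ → ℝ) (2 * n - 1) / (2 * n : ℝ) := by
    intro b
    rw [← SetLike.mem_coe, hB]; rfl
  refine ⟨?_, ?_, ?_⟩
  · rw [hA]
    have : {a : lp (fun _ : ℕ => ℝ) 2 | ∀ n : ℕ, 1 ≤ n → (a : ℕ → ℝ) (2 * n) = 0}
        = ⋂ n : ℕ, {a : lp (fun _ : ℕ => ℝ) 2 | 1 ≤ n → (a : ℕ → ℝ) (2 * n) = 0} := by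
      ext a; simp [Set.mem_iInter]
    rw [this]
    refine isClosed_iInter fun n => ?_
    by_cases hn : 1 ≤ n
    · have : {a : lp (fun _ : ℕ => ℝ) 2 | 1 ≤ n → (a : ℕ → ℝ) (2 * n) = 0}
          = (fun a : lp (fun _ : ℕ => ℝ) 2 => (a : ℕ → ℝ) (2 * n)) ⁻¹' {0} := by
        ext a; simp [hn]
      rw [this]
      exact IsClosed.preimage (stmt5_eval_cont _) isClosed_singleton
    · have : {a : lp (fun _ : ℕ => ℝ) 2 | 1 ≤ n → (a : ℕ → ℝ) (2 * n) = 0} = Set.univ := by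
        ext a; simp [hn]
      rw [this]; exact isClosed_univ
  · rw [hB]
    have : {b : lp (fun _ : ℕ => ℝ) 2 | ∀ n : ℕ, 1 ≤ n →
          (b : ℕ → ℝ) (2 * n) = (b : ℕ → ℝ) (2 * n - 1) / (2 * n : ℝ)}
        = ⋂ n : ℕ, {b : lp (fun _ : ℕ => ℝ) 2 | 1 ≤ n →
          (b : ℕ → ℝ) (2 * n) = (b : ℕ → ℝ) (2 * n - 1) / (2 * n : ℝ)} := by
      ext b; simp [Set.mem_iInter]
    rw [this]
    refine isClosed_iInter fun n => ?_
    by_cases hn : 1 ≤ n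
    · have : {b : lp (fun _ : ℕ => ℝ) 2 | 1 ≤ n →
            (b : ℕ → ℝ) (2 * n) = (b : ℕ → ℝ) (2 * n - 1) / (2 * n : ℝ)}
          = {b : lp (fun _ : ℕ => ℝ) 2 |
            (b : ℕ → ℝ) (2 * n) = (b : ℕ → ℝ) (2 * n - 1) / (2 * n : ℝ)} := by
        ext b; simp [hn]
      rw [this]
      exact isClosed_eq (stmt5_eval_cont _) ((stmt5_eval_cont _).div_const _)
    · have : {b : lp (fun _ : ℕ => ℝ) 2 | 1 ≤ n →
            (b : ℕ → ℝ) (2 * n) = (b : ℕ → ℝ) (2 * n - 1) / (2 * n : ℝ)} = Set.univ := by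
        ext b; simp [hn]
      rw [this]; exact isClosed_univ
  · -- the sum is not closed
    set S : Set (lp (fun _ : ℕ => ℝ) 2) := {x | ∃ a ∈ A, ∃ b ∈ B, x = a + b} with hS
    -- every finitely supported element is in S
    have hfin : ∀ x : lp (fun _ : ℕ => ℝ) 2,
        (Function.support (x : ℕ → ℝ)).Finite → x ∈ S := by
      intro x hx
      set b : lp (fun _ : ℕ => ℝ) 2 :=
        ⟨stmt5_bfun (x : ℕ → ℝ), stmt5_memℓp_of_finite (stmt5_bfun_support hx)⟩ with hb
      have hbcoe : (b : ℕ → ℝ) = stmt5_bfun (x : ℕ → ℝ) := rfl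
      have hbB : b ∈ B := by
        rw [memB]
        intro n hn
        rw [hbcoe, stmt5_bfun_even hn, stmt5_bfun_odd hn]
        have h2n : (2 * n : ℝ) ≠ 0 := by positivity
        field_simp
      have haA : x - b ∈ A := by
        rw [memA]
        intro n hn
        rw [lp.coeFn_sub, Pi.sub_apply, hbcoe, stmt5_bfun_even hn, sub_self]
      exact ⟨x - b, haA, b, hbB, by abel⟩
    -- the special element x₀
    set f₀ : ℕ → ℝ := fun k => if Even k ∧ k ≠ 0 then 1 / (k : ℝ) else 0 with hf₀
    have hf₀mem : Memℓp f₀ 2 := by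
      apply memℓp_gen
      rw [stmt5_toReal]
      have hsum : Summable (fun k : ℕ => 1 / (k : ℝ) ^ 2) := by
        simpa using Real.summable_one_div_nat_pow.2 one_lt_two
      apply hsum.of_nonneg_of_le (fun k => by positivity)
      intro k
      by_cases h : Even k ∧ k ≠ 0
      · simp only [hf₀, if_pos h]
        have hval : ‖1/(k:ℝ)‖ ^ (2:ℝ) = 1/(k:ℝ)^2 := by
          rw [Real.norm_eq_abs, show (2:ℝ) = ((2:ℕ):ℝ) by norm_num, Real.rpow_natCast, sq_abs,
            div_pow, one_pow]
        rw [hval]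
      · simp only [hf₀, if_neg h]
        simp only [norm_zero]
        rw [Real.zero_rpow (by norm_num)]
        positivity
    set x₀ : lp (fun _ : ℕ => ℝ) 2 := ⟨f₀, hf₀mem⟩ with hx₀
    have hx₀coe : (x₀ : ℕ → ℝ) = f₀ := rfl
    -- x₀ is in the closure of S
    have hclos : x₀ ∈ closure S := by
      have hsum := lp.hasSum_single (E := fun _ : ℕ => ℝ) (p := 2) (by norm_num) x₀
      refine mem_closure_of_tendsto hsum ?_
      filter_upwards with s
      apply hfin
      apply (s.finite_toSet).subset
      intro k hk
      simp only [Function.mem_support] at hk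
      by_contra hks
      apply hk
      rw [lp.coeFn_sum, Finset.sum_apply]
      apply Finset.sum_eq_zero
      intro i hi
      rw [lp.single_apply]
      rw [Pi.single_eq_of_ne]
      rintro rfl
      exact hks hi
    -- x₀ is not in S
    have hnot : x₀ ∉ S := by
      rintro ⟨a, haA, b, hbB, hab⟩
      rw [memA] at haA
      rw [memB] at hbB
      have hb1 : ∀ n : ℕ, 1 ≤ n → (b : ℕ → ℝ) (2 * n - 1) = 1 := by
        intro n hn
        have hx : (x₀ : ℕ → ℝ) (2 * n) = 1 / (2 * n : ℝ) := by
          have hcond : Even (2 * n) ∧ 2 * n ≠ 0 := ⟨even_two_mul n, by omega⟩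
          rw [hx₀coe, hf₀]
          simp only [if_pos hcond]
          push_cast
          ring
        have hxab : (x₀ : ℕ → ℝ) (2 * n) = (a : ℕ → ℝ) (2 * n) + (b : ℕ → ℝ) (2 * n) := by
          rw [hab, lp.coeFn_add, Pi.add_apply]
        have hbx : (b : ℕ → ℝ) (2 * n) = 1 / (2 * n : ℝ) := by
          rw [hxab, haA n hn, zero_add] at hx
          exact hx
        have := hbB n hn
        rw [hbx] at this
        have h2n : (2 * n : ℝ) ≠ 0 := by positivity
        field_simp at this
        linarith [this]
      -- summability of ‖b k‖ ^ 2 contradicts b (2n-1) = 1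
      have hsum : Summable fun k => ‖(b : ℕ → ℝ) k‖ ^ (2:ℝ) := by
        have := lp.memℓp b
        rw [memℓp_gen_iff (by rw [stmt5_toReal]; norm_num)] at this
        rw [stmt5_toReal] at this
        exact this
      have htend := hsum.tendsto_atTop_zero
      have hmono : StrictMono (fun n : ℕ => 2 * n - 1) := by
        intro m n hmn
        simp only
        omega
      have htend2 : Tendsto (fun n : ℕ => ‖(b : ℕ → ℝ) (2 * n - 1)‖ ^ (2:ℝ)) atTop (nhds 0) :=
        htend.comp hmono.tendsto_atTop
      have hconst : Tendsto (fun _ : ℕ => (1:ℝ)) atTop (nhds 0) := by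
        refine htend2.congr' ?_
        filter_upwards [eventually_ge_atTop 1] with n hn
        rw [hb1 n hn]
        norm_num
      have := tendsto_nhds_unique hconst tendsto_const_nhds
      norm_num at this
    intro hcl
    exact hnot (hcl.closure_subset hclos)
end

section
/- Let E, F be Banach spaces, T : E → F a Fredholm operator and S : E → F a compact operator. Then T + S is Fredholm and index(T + S) = index(T). -/
/-!
For a Fredholm operator `A`, choose a continuous projection `p : E → ker A` and a complement `W`
of `range A`. The bordered operator `(x, w) ↦ (A x + w, p x) : E × W → F × ker A` is then
invertible. For any `B` whose bordered operator `(x, w) ↦ (B x + w, p x)` is invertible, linear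
algebra gives `index B = dim ker A - dim W`; since invertibility is an open condition, the index is
locally constant on Fredholm operators.

The inverse of the bordered operator also yields `P` such that `P A - 1` and `A P - 1` have finite
rank. Then `P (T + S) - 1` and `(T + S) P - 1` are compact, and the Riesz theory of `1 + K` for
compact `K` (finite-dimensional kernel and, via the Fredholm alternative, finite-codimensional
range) shows that `T + S` is Fredholm. So is every `T + t • S`, and the index is constant along
this path.
-/

/-- A bounded operator is Fredholm if its kernel is finite-dimensional and its range
is closed of finite codimension. -/
def IsFredholm {E F : Type*} [NormedAddCommGroup E] [NormedSpace ℝ E]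
    [NormedAddCommGroup F] [NormedSpace ℝ F] (T : E →L[ℝ] F) : Prop :=
  FiniteDimensional ℝ (LinearMap.ker (T : E →ₗ[ℝ] F)) ∧ IsClosed (LinearMap.range (T : E →ₗ[ℝ] F) : Set F) ∧
    FiniteDimensional ℝ (F ⧸ LinearMap.range (T : E →ₗ[ℝ] F))

/-- The Fredholm index `dim ker T - dim coker T`. -/
noncomputable def fredholmIndex {E F : Type*} [NormedAddCommGroup E] [NormedSpace ℝ E]
    [NormedAddCommGroup F] [NormedSpace ℝ F] (T : E →L[ℝ] F) : ℤ :=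
  (Module.finrank ℝ (LinearMap.ker (T : E →ₗ[ℝ] F)) : ℤ) -
    (Module.finrank ℝ (F ⧸ LinearMap.range (T : E →ₗ[ℝ] F)) : ℤ)

open Module Submodule LinearMap Filter Topology

namespace LinearMap

section Bordered

variable {K E F N : Type*} [Field K] [AddCommGroup E] [Module K E] [AddCommGroup F] [Module K F]
  [AddCommGroup N] [Module K N]

def bordered (B : E →ₗ[K] F) (W : Submodule K F) (p : E →ₗ[K] N) : E × W →ₗ[K] F × N :=
  (B.coprod W.subtype).prod (p ∘ₗ fst K E W)

@[simp]
theorem bordered_apply (B : E →ₗ[K] F) (W : Submodule K F) (p : E →ₗ[K] N) (z : E × W) :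
    B.bordered W p z = (B z.1 + z.2, p z.1) := rfl

theorem finrank_comap_eq_finrank_ker_add_finrank_inf (B : E →ₗ[K] F) (W : Submodule K F)
    [FiniteDimensional K (W.comap B)] :
    finrank K (W.comap B) = finrank K (ker B) + finrank K (range B ⊓ W : Submodule K F) := by
  have hker : ker B ≤ W.comap B := fun x hx => by simp [mem_ker.1 hx]
  rw [← (B ∘ₗ (W.comap B).subtype).finrank_range_add_finrank_ker, add_comm, range_comp,
    range_subtype, map_comap_eq, ker_comp, (comapSubtypeEquivOfLe hker).finrank_eq]

theorem _root_.Submodule.finrank_eq_finrank_quotient_add_finrank_inf {R W : Submodule K F}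
    (h : Codisjoint W R) [FiniteDimensional K W] :
    finrank K W = finrank K (F ⧸ R) + finrank K (R ⊓ W : Submodule K F) := by
  have hs : range (R.mkQ ∘ₗ W.subtype) = ⊤ := by
    rw [range_comp, range_subtype, map_mkQ_eq_top, sup_comm, h.eq_top]
  rw [← (R.mkQ ∘ₗ W.subtype).finrank_range_add_finrank_ker, hs, finrank_top, ker_comp, ker_mkQ,
    ← finrank_map_subtype_eq, map_comap_subtype, inf_comm]

variable {B : E →ₗ[K] F} {W : Submodule K F} {p : E →ₗ[K] N}

theorem codisjoint_of_bijective_bordered (hΦ : Function.Bijective (B.bordered W p)) :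
    Codisjoint W (range B) := by
  rw [codisjoint_iff, eq_top_iff]
  intro y _
  obtain ⟨⟨x, w⟩, h⟩ := hΦ.2 (y, 0)
  exact mem_sup.2
    ⟨w, w.2, B x, mem_range_self B x, by simpa [add_comm] using congr_arg Prod.fst h⟩

noncomputable def comapEquivOfBijectiveBordered (hΦ : Function.Bijective (B.bordered W p)) :
    W.comap B ≃ₗ[K] N := by
  refine .ofBijective (p ∘ₗ (W.comap B).subtype) ⟨fun x y hxy => ?_, fun n => ?_⟩
  · have hx : B (x - y) ∈ W := by simpa using sub_mem x.2 y.2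
    have h : B.bordered W p (x - y, -⟨_, hx⟩) = B.bordered W p 0 := by
      simpa [sub_eq_zero] using hxy
    simpa [sub_eq_zero] using congr_arg Prod.fst (hΦ.1 h)
  · obtain ⟨⟨x, w⟩, h⟩ := hΦ.2 (0, n)
    simp only [bordered_apply, Prod.mk.injEq] at h
    exact ⟨⟨x, by simp [eq_neg_of_add_eq_zero_left h.1, w.2]⟩, h.2⟩

theorem finrank_ker_add_finrank_eq_of_bijective_bordered [FiniteDimensional K N]
    [FiniteDimensional K W] (hΦ : Function.Bijective (B.bordered W p)) :
    finrank K (ker B) + finrank K W = finrank K (F ⧸ range B) + finrank K N := by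
  have := (comapEquivOfBijectiveBordered hΦ).symm.finiteDimensional
  rw [← (comapEquivOfBijectiveBordered hΦ).finrank_eq,
    finrank_comap_eq_finrank_ker_add_finrank_inf,
    finrank_eq_finrank_quotient_add_finrank_inf (codisjoint_of_bijective_bordered hΦ)]
  ring

end Bordered

theorem ker_add_smulRight_lt {K E F : Type*} [Field K] [AddCommGroup E] [Module K E]
    [AddCommGroup F] [Module K F] {A : E →ₗ[K] F} {φ : E →ₗ[K] K} {e : E} {w : F}
    (he : e ∈ ker A) (hφ : φ e ≠ 0) (hw : w ∉ range A) : ker (A + φ.smulRight w) < ker A := by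
  have hle : ker (A + φ.smulRight w) ≤ ker A := fun x hx => by
    have hx : A x + φ x • w = 0 := hx
    obtain h | h := eq_or_ne (φ x) 0
    · simpa [h] using hx
    · refine absurd ?_ hw
      rw [← inv_smul_smul₀ (neg_ne_zero.2 h) w, neg_smul, ← eq_neg_of_add_eq_zero_left hx]
      exact smul_mem _ _ (mem_range_self A x)
  refine lt_of_le_of_ne hle fun h => ?_
  have he' : e ∈ ker (A + φ.smulRight w) := h ▸ he
  have : A e + φ e • w = 0 := he'
  rw [mem_ker.1 he, zero_add, smul_eq_zero] at this
  exact hw (this.resolve_left hφ ▸ zero_mem _)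

end LinearMap

section

variable {𝕜 E F : Type*} [NontriviallyNormedField 𝕜] [CompleteSpace 𝕜]
  [NormedAddCommGroup E] [NormedSpace 𝕜 E] [CompleteSpace E]
  [NormedAddCommGroup F] [NormedSpace 𝕜 F] [CompleteSpace F]

theorem ContinuousLinearMap.isClosed_range_of_finiteDimensional_quotient (T : E →L[𝕜] F)
    [FiniteDimensional 𝕜 (F ⧸ range (T : E →ₗ[𝕜] F))] :
    IsClosed (range (T : E →ₗ[𝕜] F) : Set F) := by
  obtain ⟨W, hW⟩ := (range (T : E →ₗ[𝕜] F)).exists_isCompl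
  have : FiniteDimensional 𝕜 W := (quotientEquivOfIsCompl _ _ hW).finiteDimensional
  have : CompleteSpace W := FiniteDimensional.complete 𝕜 W
  set Φ : E × W →L[𝕜] F := T.coprod W.subtypeL
  have hΦ : Function.Surjective Φ := fun y => by
    obtain ⟨_, ⟨x, rfl⟩, w, hw, hy⟩ := mem_sup.1 (hW.sup_eq_top ▸ Submodule.mem_top : y ∈ _)
    exact ⟨(x, ⟨w, hw⟩), hy⟩
  rw [← ((Φ.isOpenMap hΦ).isQuotientMap Φ.continuous hΦ).isClosed_preimage]
  have : Φ ⁻¹' range (T : E →ₗ[𝕜] F) = {z | z.2 = 0} := by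
    ext ⟨x, w⟩
    change T x + (w : F) ∈ range (T : E →ₗ[𝕜] F) ↔ w = 0
    exact (add_mem_cancel_left (mem_range_self (T : E →ₗ[𝕜] F) x)).trans
      ⟨fun h => Subtype.ext (disjoint_def.1 hW.disjoint _ h w.2), fun h => h ▸ zero_mem _⟩
  rw [this]
  exact isClosed_eq continuous_snd continuous_const

end

namespace IsCompactOperator

variable {𝕜 E : Type*} [RCLike 𝕜] [NormedAddCommGroup E] [NormedSpace 𝕜 E] {K : E →L[𝕜] E}

theorem finiteDimensional_ker_one_add (hK : IsCompactOperator K) :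
    FiniteDimensional 𝕜 (ker ((1 + K : E →L[𝕜] E) : E →ₗ[𝕜] E)) := by
  set V := ker ((1 + K : E →L[𝕜] E) : E →ₗ[𝕜] E)
  have hV : ∀ v ∈ V, K v = -v := fun v hv => eq_neg_of_add_eq_zero_right hv
  have hmaps : ∀ v ∈ V, K v ∈ V := fun v hv => hV v hv ▸ neg_mem hv
  have hid : (id : V → V) = -⇑((K : E →ₗ[𝕜] E).restrict hmaps) :=
    funext fun v => Subtype.ext (by simp [LinearMap.restrict_apply, hV v v.2])
  have : IsCompactOperator (id : V → V) :=
    hid ▸ (hK.restrict hmaps (ContinuousLinearMap.isClosed_ker _)).neg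
  have := LocallyCompactSpace.of_isCompactOperator_id this
  exact .of_locallyCompactSpace 𝕜

variable [CompleteSpace E]

theorem surjective_one_add_of_injective (hK : IsCompactOperator K)
    (hinj : Function.Injective (1 + K : E →L[𝕜] E)) : Function.Surjective (1 + K : E →L[𝕜] E) := by
  rcases hK.hasEigenvalue_or_mem_resolventSet (μ := -1) (by norm_num) with h | h
  · obtain ⟨x, hx⟩ := h.exists_hasEigenvector
    refine absurd (hinj ?_) hx.2
    have hKx : K x = -x := by simpa using hx.apply_eq_smul
    simp [hKx]
  · rw [spectrum.mem_resolventSet_iff, ContinuousLinearMap.isUnit_iff_bijective] at h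
    have : (algebraMap 𝕜 (E →L[𝕜] E) (-1) - K) = -(1 + K) := by simp; abel
    rw [this] at h
    exact fun y => (h.2 (-y)).imp fun x hx => neg_injective hx

theorem exists_fg_codisjoint_range_one_add (hK : IsCompactOperator K) :
    ∃ V : Submodule 𝕜 E, V.FG ∧ Codisjoint V (range ((1 + K : E →L[𝕜] E) : E →ₗ[𝕜] E)) := by
  induction hn : finrank 𝕜 (ker ((1 + K : E →L[𝕜] E) : E →ₗ[𝕜] E)) using Nat.strong_induction_on
    generalizing K with
  | _ n ih =>
  -- A rank-one perturbation sending a kernel vector outside the range lowers `dim ker`; once the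
  -- kernel is trivial, the Fredholm alternative makes `1 + K` surjective.
  set A : E →ₗ[𝕜] E := ((1 + K : E →L[𝕜] E) : E →ₗ[𝕜] E)
  by_cases htop : range A = ⊤
  · exact ⟨⊥, fg_bot, htop ▸ codisjoint_top_right⟩
  obtain ⟨w, hw⟩ : ∃ w, w ∉ range A := by
    by_contra! h
    exact htop (eq_top_iff.2 fun w _ => h w)
  obtain ⟨e, he, he0⟩ := exists_mem_ne_zero_of_ne_bot fun h =>
    htop (range_eq_top.2 (hK.surjective_one_add_of_injective (ker_eq_bot.1 h)))
  obtain ⟨φ, hφ⟩ := SeparatingDual.exists_eq_one (R := 𝕜) he0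
  have hK' : IsCompactOperator (K + φ.smulRight w) :=
    hK.add ((isCompactOperator_of_locallyCompactSpace_dom φ).clm_comp
      (ContinuousLinearMap.toSpanSingleton 𝕜 w))
  have hA' : ((1 + (K + φ.smulRight w) : E →L[𝕜] E) : E →ₗ[𝕜] E) =
      A + (φ : E →ₗ[𝕜] 𝕜).smulRight w := by
    rw [← add_assoc]; rfl
  have hlt : ker (A + (φ : E →ₗ[𝕜] 𝕜).smulRight w) < ker A :=
    ker_add_smulRight_lt he (by simp [hφ]) hw
  have := hK.finiteDimensional_ker_one_add
  obtain ⟨V, hV, hcod⟩ := ih _ (hn ▸ finrank_lt_finrank_of_lt (hA' ▸ hlt)) hK' rfl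
  refine ⟨span 𝕜 {w} ⊔ V, (fg_span_singleton w).sup hV, ?_⟩
  have hle : range (A + (φ : E →ₗ[𝕜] 𝕜).smulRight w) ≤ span 𝕜 {w} ⊔ range A := by
    rintro _ ⟨x, rfl⟩
    exact mem_sup.2 ⟨φ x • w, smul_mem _ _ (mem_span_singleton_self w), A x, mem_range_self _ _,
      add_comm _ _⟩
  rw [hA'] at hcod
  rw [codisjoint_iff, eq_top_iff] at hcod ⊢
  calc ⊤ ≤ V ⊔ range (A + (φ : E →ₗ[𝕜] 𝕜).smulRight w) := hcod
    _ ≤ span 𝕜 {w} ⊔ V ⊔ range A := by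
      refine sup_le (le_sup_of_le_left le_sup_right) (hle.trans ?_)
      exact sup_le (le_sup_of_le_left le_sup_left) le_sup_right

theorem finiteDimensional_quotient_range_one_add (hK : IsCompactOperator K) :
    FiniteDimensional 𝕜 (E ⧸ range ((1 + K : E →L[𝕜] E) : E →ₗ[𝕜] E)) :=
  let ⟨_, hV, hcod⟩ := hK.exists_fg_codisjoint_range_one_add
  FG.cofg_of_codisjoint hcod hV

end IsCompactOperator

namespace ContinuousLinearMap

variable {𝕜 E F N : Type*} [NontriviallyNormedField 𝕜] [NormedAddCommGroup E] [NormedSpace 𝕜 E]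
  [NormedAddCommGroup F] [NormedSpace 𝕜 F] [NormedAddCommGroup N] [NormedSpace 𝕜 N]

def bordered (B : E →L[𝕜] F) (W : Submodule 𝕜 F) (p : E →L[𝕜] N) : E × W →L[𝕜] F × N :=
  (B.coprod W.subtypeL).prod (p ∘L .fst 𝕜 E W)

theorem norm_bordered_sub_bordered_le (B B' : E →L[𝕜] F) (W : Submodule 𝕜 F) (p : E →L[𝕜] N) :
    ‖B.bordered W p - B'.bordered W p‖ ≤ ‖B - B'‖ := by
  refine opNorm_le_bound _ (norm_nonneg _) fun z => ?_
  calc ‖(B.bordered W p - B'.bordered W p) z‖ = ‖(B - B') z.1‖ := by simp [bordered]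
    _ ≤ ‖B - B'‖ * ‖z.1‖ := le_opNorm _ _
    _ ≤ ‖B - B'‖ * ‖z‖ := by gcongr; exact _root_.norm_fst_le z

theorem continuous_bordered (W : Submodule 𝕜 F) (p : E →L[𝕜] N) :
    Continuous fun B : E →L[𝕜] F => B.bordered W p := by
  refine (LipschitzWith.of_dist_le_mul (K := 1) (f := fun B : E →L[𝕜] F => B.bordered W p)
    fun B B' => ?_).continuous
  calc dist (B.bordered W p) (B'.bordered W p) = ‖B.bordered W p - B'.bordered W p‖ :=
        dist_eq_norm_sub (B.bordered W p) (B'.bordered W p)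
    _ ≤ ‖B - B'‖ := norm_bordered_sub_bordered_le B B' W p
    _ = ((1 : NNReal) : ℝ) * dist B B' := by rw [NNReal.coe_one, one_mul, dist_eq_norm_sub B B']

end ContinuousLinearMap

section Fredholm

variable {E F : Type*} [NormedAddCommGroup E] [NormedSpace ℝ E] [NormedAddCommGroup F]
  [NormedSpace ℝ F]

theorem fredholmIndex_eq_of_bijective_bordered {N : Type*} [NormedAddCommGroup N]
    [NormedSpace ℝ N] [FiniteDimensional ℝ N] {B : E →L[ℝ] F} {W : Submodule ℝ F}
    [FiniteDimensional ℝ W] {p : E →L[ℝ] N} (h : Function.Bijective (B.bordered W p)) :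
    fredholmIndex B = finrank ℝ N - finrank ℝ W := by
  have := LinearMap.finrank_ker_add_finrank_eq_of_bijective_bordered
    (B := (B : E →ₗ[ℝ] F)) (W := W) (p := (p : E →ₗ[ℝ] N)) h
  unfold fredholmIndex
  omega

theorem IsFredholm.exists_bijective_bordered {A : E →L[ℝ] F} (hA : IsFredholm A) :
    ∃ (W : Submodule ℝ F) (p : E →L[ℝ] ker (A : E →ₗ[ℝ] F)),
      FiniteDimensional ℝ W ∧ Function.Bijective (A.bordered W p) := by
  obtain ⟨hker, -, hcoker⟩ := hA
  obtain ⟨p, hp⟩ := Submodule.ClosedComplemented.of_finiteDimensional (ker (A : E →ₗ[ℝ] F))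
  obtain ⟨W, hW⟩ := (range (A : E →ₗ[ℝ] F)).exists_isCompl
  refine ⟨W, p, (quotientEquivOfIsCompl _ _ hW).finiteDimensional, ?_, fun ⟨y, n⟩ => ?_⟩
  · refine (injective_iff_map_eq_zero (A.bordered W p)).2 fun ⟨x, w⟩ h => ?_
    have h1 : A x + (w : F) = 0 := congr_arg Prod.fst h
    have h2 : p x = 0 := congr_arg Prod.snd h
    have hw : (w : F) = 0 :=
      disjoint_def.1 hW.disjoint _ ⟨-x, by simp [eq_neg_of_add_eq_zero_right h1]⟩ w.2
    have hx : x ∈ ker (A : E →ₗ[ℝ] F) := by simpa [hw] using h1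
    have hx0 : x = 0 := by simpa [h2] using (hp ⟨x, hx⟩).symm
    exact Prod.ext hx0 (Subtype.ext hw)
  · obtain ⟨_, ⟨x, rfl⟩, w, hw, hy⟩ := mem_sup.1 (hW.sup_eq_top ▸ Submodule.mem_top : y ∈ _)
    have hAn : A n = 0 := n.2
    have hApx : A (p x) = 0 := (p x).2
    refine ⟨(x - p x + n, ⟨w, hw⟩), Prod.ext ?_ ?_⟩
    · simpa [ContinuousLinearMap.bordered, hAn, hApx] using hy
    · simp [ContinuousLinearMap.bordered, hp]

variable [CompleteSpace E] [CompleteSpace F]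

theorem IsFredholm.eventually_fredholmIndex_eq {A : E →L[ℝ] F} (hA : IsFredholm A) :
    ∀ᶠ B in 𝓝 A, fredholmIndex B = fredholmIndex A := by
  obtain ⟨W, p, hW, hbij⟩ := hA.exists_bijective_bordered
  have := hA.1
  have : CompleteSpace W := FiniteDimensional.complete ℝ W
  have : CompleteSpace (ker (A : E →ₗ[ℝ] F)) := FiniteDimensional.complete ℝ _
  let e := ContinuousLinearEquiv.ofBijective (A.bordered W p) (ker_eq_bot.2 hbij.1)
    (range_eq_top.2 hbij.2)
  filter_upwards [(ContinuousLinearMap.continuous_bordered W p).continuousAt.preimage_mem_nhds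
    (ContinuousLinearEquiv.isOpen.mem_nhds ⟨e, rfl⟩)] with B ⟨e', he'⟩
  have hB : Function.Bijective (B.bordered W p) := by
    beta_reduce at he'
    exact he' ▸ e'.bijective
  rw [fredholmIndex_eq_of_bijective_bordered hB,
    fredholmIndex_eq_of_bijective_bordered hbij]

theorem IsFredholm.exists_parametrix {A : E →L[ℝ] F} (hA : IsFredholm A) :
    ∃ P : F →L[ℝ] E, IsCompactOperator (P ∘L A - 1 : E →L[ℝ] E) ∧
      IsCompactOperator (A ∘L P - 1 : F →L[ℝ] F) := by
  obtain ⟨W, p, hW, hbij⟩ := hA.exists_bijective_bordered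
  have := hA.1
  have : CompleteSpace W := FiniteDimensional.complete ℝ W
  have : CompleteSpace (ker (A : E →ₗ[ℝ] F)) := FiniteDimensional.complete ℝ _
  set e := ContinuousLinearEquiv.ofBijective (A.bordered W p) (ker_eq_bot.2 hbij.1)
    (range_eq_top.2 hbij.2)
  have he (z) : e z = A.bordered W p z := rfl
  set Ψ : F × ker (A : E →ₗ[ℝ] F) →L[ℝ] E × W := e.symm.toContinuousLinearMap
  set P : F →L[ℝ] E := .fst ℝ E W ∘L Ψ ∘L .inl ℝ F _
  refine ⟨P, ?_, ?_⟩
  · have : ⇑(P ∘L A - 1) = -⇑(.fst ℝ E W ∘L Ψ ∘L .inr ℝ F _ ∘L p) := funext fun x => by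
      have h : Ψ (A x, 0) + Ψ (0, p x) = (x, 0) := by
        rw [← map_add, Prod.mk_add_mk, add_zero, zero_add]
        exact e.symm_apply_eq.2 (by simp [he, ContinuousLinearMap.bordered])
      have h1 : (Ψ (A x, 0)).1 + (Ψ (0, p x)).1 = x := congr_arg Prod.fst h
      change (Ψ (A x, 0)).1 - x = -(Ψ (0, p x)).1
      exact eq_neg_of_add_eq_zero_left (by rw [sub_add_eq_add_sub, h1, sub_self])
    rw [this]
    exact ((isCompactOperator_of_locallyCompactSpace_dom p).clm_comp
      (.fst ℝ E W ∘L Ψ ∘L .inr ℝ F _)).neg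
  · have : ⇑(A ∘L P - 1) = -⇑(W.subtypeL ∘L .snd ℝ E W ∘L Ψ ∘L .inl ℝ F _) := funext fun y => by
      have h1 : A (Ψ (y, 0)).1 + (Ψ (y, 0)).2 = y := congr_arg Prod.fst (e.apply_symm_apply (y, 0))
      change A (Ψ (y, 0)).1 - y = -((Ψ (y, 0)).2 : F)
      exact eq_neg_of_add_eq_zero_left (by rw [sub_add_eq_add_sub, h1, sub_self])
    rw [this]
    exact ((isCompactOperator_of_locallyCompactSpace_dom
      (.snd ℝ E W ∘L Ψ ∘L .inl ℝ F _)).clm_comp W.subtypeL).neg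

theorem isFredholm_of_compact_parametrix {A : E →L[ℝ] F} {P : F →L[ℝ] E}
    (hl : IsCompactOperator (P ∘L A - 1 : E →L[ℝ] E))
    (hr : IsCompactOperator (A ∘L P - 1 : F →L[ℝ] F)) :
    IsFredholm A := by
  have hPA : P ∘L A = 1 + (P ∘L A - 1) := (add_sub_cancel _ _).symm
  have hAP : A ∘L P = 1 + (A ∘L P - 1) := (add_sub_cancel _ _).symm
  have hker := hl.finiteDimensional_ker_one_add
  have hcoker := hr.finiteDimensional_quotient_range_one_add
  rw [← hPA] at hker
  rw [← hAP] at hcoker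
  have : FiniteDimensional ℝ (F ⧸ range (A : E →ₗ[ℝ] F)) :=
    CoFG.of_le (range_comp_le_range (P : F →ₗ[ℝ] E) (A : E →ₗ[ℝ] F)) hcoker
  exact ⟨Submodule.finiteDimensional_of_le (S₂ := ker ((P ∘L A : E →L[ℝ] E) : E →ₗ[ℝ] E))
    (ker_le_ker_comp (A : E →ₗ[ℝ] F) (P : F →ₗ[ℝ] E)),
    A.isClosed_range_of_finiteDimensional_quotient, this⟩

theorem IsFredholm.add_compact {T S : E →L[ℝ] F} (hT : IsFredholm T)
    (hS : IsCompactOperator S) : IsFredholm (T + S) := by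
  obtain ⟨P, hl, hr⟩ := hT.exists_parametrix
  refine isFredholm_of_compact_parametrix (P := P) ?_ ?_
  · rw [ContinuousLinearMap.comp_add, add_sub_right_comm]
    exact hl.add (hS.clm_comp P)
  · rw [ContinuousLinearMap.add_comp, add_sub_right_comm]
    exact hr.add (hS.comp_clm P)

end Fredholm

theorem stmt_9 {E F : Type*} [NormedAddCommGroup E] [NormedSpace ℝ E] [CompleteSpace E]
    [NormedAddCommGroup F] [NormedSpace ℝ F] [CompleteSpace F]
    (T S : E →L[ℝ] F) (hT : IsFredholm T) (hS : IsCompactOperator S) :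
    IsFredholm (T + S) ∧ fredholmIndex (T + S) = fredholmIndex T := by
  have hpath : Continuous fun t : ℝ => T + t • S := by fun_prop
  have hfred (t : ℝ) : IsFredholm (T + t • S) := hT.add_compact (hS.smul t)
  have hconst : IsLocallyConstant fun t : ℝ => fredholmIndex (T + t • S) :=
    (IsLocallyConstant.iff_eventually_eq _).2 fun t =>
      (hpath.tendsto t).eventually (hfred t).eventually_fredholmIndex_eq
  exact ⟨by simpa using hfred 1, by simpa using hconst.apply_eq_of_preconnectedSpace 1 0⟩
end

section
/- Let E₁, E₀, F₀ be Banach spaces, U₁ ⊆ E₁ open, and Φ : U₁ × E₀ → F₀ a continuous map that is linear in the second variable. If S : E₁ → E₀ is a compact linear operator, then the map U₁ → L(E₁, F₀), x ↦ (ξ ↦ Φ(x, S ξ)), is continuous with respect to the operator norm topology on L(E₁, F₀). -/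
/-!
On the compact set `K ⊇ S(closedBall 0 1)`, continuity of `Φ` makes `Φ (x, ·)` converge uniformly to
`Φ (x₀, ·)` as `x → x₀` within `U₁` (a tube-lemma argument). Composing with `S`, the operators `Ψ x`
converge to `Ψ x₀` uniformly on the unit sphere, which is convergence in operator norm.
-/

open Filter Topology Metric

theorem ContinuousOn.tendstoUniformlyOn_of_isCompact {α β γ : Type*} [TopologicalSpace α]
    [TopologicalSpace β] [UniformSpace γ] {f : α × β → γ} {s : Set α} {K : Set β} {x₀ : α}
    (hf : ContinuousOn f (s ×ˢ K)) (hK : IsCompact K) (hx₀ : x₀ ∈ s) :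
    TendstoUniformlyOn (fun x y => f (x, y)) (fun y => f (x₀, y)) (𝓝[s] x₀) K := by
  intro u hu
  obtain ⟨v, hv, hvK⟩ :=
    hK.mem_uniformity_of_prod (f := fun x y => f (x, y)) hf hx₀ (symm_le_uniformity hu)
  exact mem_of_superset hv hvK

theorem ContinuousLinearMap.tendsto_of_tendstoUniformlyOn_sphere {𝕜 E F ι : Type*}
    [NontriviallyNormedField 𝕜] [NormedAlgebra ℝ 𝕜]
    [SeminormedAddCommGroup E] [NormedSpace 𝕜 E] [SeminormedAddCommGroup F] [NormedSpace 𝕜 F]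
    {l : Filter ι} {T : ι → E →L[𝕜] F} {T₀ : E →L[𝕜] F}
    (h : TendstoUniformlyOn (fun i => ⇑(T i)) T₀ l (sphere 0 1)) :
    Tendsto T l (𝓝 T₀) := by
  refine Metric.tendsto_nhds.mpr fun ε hε => ?_
  filter_upwards [Metric.tendstoUniformlyOn_iff.mp h (ε / 2) (half_pos hε)] with i hi
  have hnorm : ‖T i - T₀‖ ≤ ε / 2 := by
    refine opNorm_le_of_unit_norm (half_pos hε).le fun ξ hξ => ?_
    rw [sub_apply, ← dist_eq_norm, dist_comm]
    exact (hi ξ (mem_sphere_zero_iff_norm.mpr hξ)).le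
  rw [dist_eq_norm]
  linarith

theorem stmt_11_general {E₁ E₀ F₀ : Type*}
    [NormedAddCommGroup E₁] [NormedSpace ℝ E₁]
    [NormedAddCommGroup E₀] [NormedSpace ℝ E₀]
    [NormedAddCommGroup F₀] [NormedSpace ℝ F₀]
    (U₁ : Set E₁)
    (Φ : E₁ × E₀ → F₀) (hΦcont : ContinuousOn Φ (U₁ ×ˢ (Set.univ : Set E₀)))
    (S : E₁ →L[ℝ] E₀) (hS : IsCompactOperator S)
    (Ψ : E₁ → (E₁ →L[ℝ] F₀)) (hΨ : ∀ x ∈ U₁, ∀ ξ : E₁, Ψ x ξ = Φ (x, S ξ)) :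
    ContinuousOn Ψ U₁ := by
  intro x₀ hx₀
  obtain ⟨K, hK, hSK⟩ := hS.image_closedBall_subset_compact (f := (S : E₁ →ₗ[ℝ] E₀)) 1
  have hΦK : TendstoUniformlyOn (fun x y => Φ (x, y)) (fun y => Φ (x₀, y)) (𝓝[U₁] x₀) K :=
    (hΦcont.mono (Set.prod_mono le_rfl (Set.subset_univ K))).tendstoUniformlyOn_of_isCompact hK hx₀
  have hΦS : TendstoUniformlyOn (fun x ξ => Φ (x, S ξ)) (fun ξ => Φ (x₀, S ξ)) (𝓝[U₁] x₀)
      (sphere 0 1) :=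
    (hΦK.comp S).mono (sphere_subset_closedBall.trans (Set.image_subset_iff.mp hSK))
  refine ContinuousLinearMap.tendsto_of_tendstoUniformlyOn_sphere ((hΦS.congr ?_).congr_right ?_)
  · filter_upwards [self_mem_nhdsWithin] with x hx ξ _
    exact (hΨ x hx ξ).symm
  · exact fun ξ _ => (hΨ x₀ hx₀ ξ).symm

theorem stmt_11 {E₁ E₀ F₀ : Type*}
    [NormedAddCommGroup E₁] [NormedSpace ℝ E₁] [CompleteSpace E₁]
    [NormedAddCommGroup E₀] [NormedSpace ℝ E₀] [CompleteSpace E₀]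
    [NormedAddCommGroup F₀] [NormedSpace ℝ F₀] [CompleteSpace F₀]
    (U₁ : Set E₁) (hU : IsOpen U₁)
    (Φ : E₁ × E₀ → F₀) (hΦcont : ContinuousOn Φ (U₁ ×ˢ (Set.univ : Set E₀)))
    (hΦlin : ∀ x ∈ U₁, IsLinearMap ℝ fun ξ : E₀ => Φ (x, ξ))
    (S : E₁ →L[ℝ] E₀) (hS : IsCompactOperator S)
    (Ψ : E₁ → (E₁ →L[ℝ] F₀)) (hΨ : ∀ x ∈ U₁, ∀ ξ : E₁, Ψ x ξ = Φ (x, S ξ)) :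
    ContinuousOn Ψ U₁ :=
  stmt_11_general U₁ Φ hΦcont S hS Ψ hΨ
end

section
/- Every finite-codimensional closed subspace A of a Banach space X admits a topological complement contained in any given dense subspace X_∞ of X; i.e., there is a finite-dimensional subspace C ⊆ X_∞ with A ⊕ C = X. -/
set_option synthInstance.maxHeartbeats 1000000

theorem stmt_13 {X : Type*} [NormedAddCommGroup X] [NormedSpace ℝ X] [CompleteSpace X]
    (A : Submodule ℝ X) (hA : IsClosed (A : Set X))
    (hcodim : FiniteDimensional ℝ (X ⧸ A))
    (Xinf : Submodule ℝ X) (hdense : Dense (Xinf : Set X)) :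
    ∃ C : Submodule ℝ X, FiniteDimensional ℝ C ∧ C ≤ Xinf ∧ IsCompl A C := by
  -- the image of Xinf in the quotient is dense, hence (being f.d.) everything
  have hcont : Continuous (A.mkQ) := continuous_quot_mk
  have hmaptop : Submodule.map A.mkQ Xinf = ⊤ := by
    have hclosed : IsClosed ((Submodule.map A.mkQ Xinf : Submodule ℝ (X ⧸ A)) : Set (X ⧸ A)) :=
      Submodule.closed_of_finiteDimensional _
    have hdq : Dense ((Submodule.map A.mkQ Xinf : Submodule ℝ (X ⧸ A)) : Set (X ⧸ A)) := by
      have hsurj : Function.Surjective (A.mkQ) := Submodule.mkQ_surjective A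
      have : Dense (A.mkQ '' (Xinf : Set X)) := by
        have h1 : closure (A.mkQ '' (Xinf : Set X)) ⊇ A.mkQ '' closure (Xinf : Set X) :=
          image_closure_subset_closure_image hcont
        rw [hdense.closure_eq] at h1
        intro x
        rcases hsurj x with ⟨y, rfl⟩
        exact h1 ⟨y, trivial, rfl⟩
      simpa [Submodule.map_coe] using this
    have := hdq.closure_eq
    rw [hclosed.closure_eq] at this
    exact SetLike.coe_injective (by rw [this]; rfl)
  -- pick a basis of the quotient and lift it into Xinf
  obtain ⟨n, b⟩ : ∃ n, Nonempty (Module.Basis (Fin n) ℝ (X ⧸ A)) :=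
    ⟨Module.finrank ℝ (X ⧸ A), ⟨Module.finBasis ℝ (X ⧸ A)⟩⟩
  obtain ⟨b⟩ := b
  have hlift : ∀ i : Fin n, ∃ v : X, v ∈ Xinf ∧ A.mkQ v = b i := by
    intro i
    have : b i ∈ Submodule.map A.mkQ Xinf := hmaptop ▸ Submodule.mem_top
    rcases this with ⟨v, hv, hveq⟩
    exact ⟨v, hv, hveq⟩
  choose v hvmem hveq using hlift
  -- the section of the quotient map
  set f : (X ⧸ A) →ₗ[ℝ] X := b.constr ℝ v with hf
  have hsec : ∀ y : X ⧸ A, A.mkQ (f y) = y := by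
    have : A.mkQ.comp f = LinearMap.id := by
      apply b.ext
      intro i
      simp [hf, hveq]
    intro y
    exact congrArg (fun g => g y) (congrArg DFunLike.coe this)
  refine ⟨LinearMap.range f, ?_, ?_, ?_⟩
  · exact Module.Finite.range f
  · rintro x ⟨y, rfl⟩
    have : f y = ∑ i, b.repr y i • v i := by
      rw [hf, Module.Basis.constr_apply_fintype]; rfl
    rw [this]
    exact Submodule.sum_mem _ fun i _ => Submodule.smul_mem _ _ (hvmem i)
  · constructor
    · rw [disjoint_iff]
      ext x
      simp only [Submodule.mem_inf, Submodule.mem_bot]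
      constructor
      · rintro ⟨hxA, y, rfl⟩
        have h1 : A.mkQ (f y) = 0 := by
          simpa [Submodule.Quotient.mk_eq_zero] using hxA
        rw [hsec y] at h1
        rw [h1, map_zero]
      · rintro rfl
        exact ⟨A.zero_mem, 0, map_zero f⟩
    · rw [codisjoint_iff]
      ext x
      simp only [Submodule.mem_top, iff_true]
      have hx : x - f (A.mkQ x) ∈ A := by
        rw [← Submodule.Quotient.mk_eq_zero]
        have : A.mkQ (x - f (A.mkQ x)) = 0 := by
          rw [map_sub, hsec]; simp
        simpa using this
      have : x = (x - f (A.mkQ x)) + f (A.mkQ x) := by abel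
      rw [this]
      exact Submodule.add_mem_sup hx ⟨A.mkQ x, rfl⟩
end

section
/- Let E be a Banach space with a compact linear inclusion i : E₁ ↪ E of a Banach space E₁ that is a dense subspace of E. If A ⊆ E is a closed subspace contained in E₁ (with the E₁-topology finer), and the restriction A ∩ E₁ is closed in E₁, then A is finite-dimensional. In particular, a closed infinite-dimensional subspace of E cannot be contained in E₁. -/
/-!
Restricting `i` gives a compact operator from the Banach space `i⁻¹' A` onto the Banach space
`A`. By the open mapping theorem a surjection between Banach spaces is open, so it carries the
neighbourhood of `0` on which it is relatively compact to a neighbourhood of `0` in `A` with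
compact closure. Hence `A` is locally compact, and finite-dimensional by Riesz's theorem.
-/

open Topology

theorem IsCompactOperator.finiteDimensional_of_surjective {𝕜 E F : Type*}
    [NontriviallyNormedField 𝕜] [CompleteSpace 𝕜]
    [NormedAddCommGroup E] [NormedSpace 𝕜 E] [CompleteSpace E]
    [NormedAddCommGroup F] [NormedSpace 𝕜 F] [CompleteSpace F]
    {f : E →L[𝕜] F} (hf : IsCompactOperator f) (hsurj : Function.Surjective f) :
    FiniteDimensional 𝕜 F := by
  obtain ⟨K, hK, hKnhds⟩ := hf
  have hK0 : K ∈ 𝓝 (0 : F) := by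
    have := (f.isOpenMap hsurj).image_mem_nhds hKnhds
    rw [map_zero] at this
    exact Filter.mem_of_superset this (Set.image_preimage_subset f K)
  have := hK.locallyCompactSpace_of_mem_nhds_of_addGroup hK0
  exact FiniteDimensional.of_locallyCompactSpace 𝕜

theorem stmt_17_general {E₁ E : Type*} [NormedAddCommGroup E₁] [NormedSpace ℝ E₁] [CompleteSpace E₁]
    [NormedAddCommGroup E] [NormedSpace ℝ E] [CompleteSpace E]
    (i : E₁ →L[ℝ] E) (hcpt : IsCompactOperator i)
    (A : Submodule ℝ E) (hAclosed : IsClosed (A : Set E))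
    (hAsub : (A : Set E) ⊆ Set.range i)
    (hA₁closed : IsClosed (i ⁻¹' (A : Set E))) :
    FiniteDimensional ℝ A := by
  let A₁ : Submodule ℝ E₁ := A.comap (i : E₁ →ₗ[ℝ] E)
  have : CompleteSpace A₁ := hA₁closed.completeSpace_coe
  have : CompleteSpace A := hAclosed.completeSpace_coe
  have hmaps : ∀ x : A₁, i x ∈ A := fun x => x.2
  let j : A₁ →L[ℝ] A := (i.comp A₁.subtypeL).codRestrict A hmaps
  have hj : IsCompactOperator j := (hcpt.comp_clm A₁.subtypeL).codRestrict hmaps hAclosed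
  refine hj.finiteDimensional_of_surjective fun a => ?_
  obtain ⟨x, hx⟩ := hAsub a.2
  exact ⟨⟨x, show i x ∈ A from hx ▸ a.2⟩, Subtype.ext hx⟩

theorem stmt_17 {E₁ E : Type*} [NormedAddCommGroup E₁] [NormedSpace ℝ E₁] [CompleteSpace E₁]
    [NormedAddCommGroup E] [NormedSpace ℝ E] [CompleteSpace E]
    (i : E₁ →L[ℝ] E) (hinj : Function.Injective i) (hcpt : IsCompactOperator i)
    (hdense : DenseRange i)
    (A : Submodule ℝ E) (hAclosed : IsClosed (A : Set E))
    (hAsub : (A : Set E) ⊆ Set.range i)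
    (hA₁closed : IsClosed (i ⁻¹' (A : Set E))) :
    FiniteDimensional ℝ A :=
  stmt_17_general i hcpt A hAclosed hAsub hA₁closed
end
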